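/- arXiv:math/0302204 — 3 statements merged into one kernel-verified Lean document; each statement's English description precedes it below -/
import Mathlib

section
/- Let V be a finite dimensional vector space over an algebraically closed field k, and let e ∈ End(V) be nilpotent acting on a direct sum V = V₁ ⊕ V₂ of two e-invariant subspaces on each of which e acts as a single nilpotent Jordan block of the same size d. Then there exists a nilpotent endomorphism z of V commuting with e such that z acts on V₁ ⊕ V₂ as a single nilpotent Jordan block of size 2d. -/
open Module Finset

/-- Iterates of a nilpotent endomorphism applied to a vector of maximal order
are linearly independent. -/
private lemma indep_iterates {k V : Type*} [Field k] [AddCommGroup V] [Module k V]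
    (e : Module.End k V) (d : ℕ) (x : V)
    (h0 : (e ^ d) x = 0) (h1 : (e ^ (d - 1)) x ≠ 0) :
    LinearIndependent k (fun i : Fin d => (e ^ (i : ℕ)) x) := by
  have hz : ∀ n, d ≤ n → (e ^ n) x = 0 := by
    intro n hn
    have h : e ^ n = e ^ (n - d) * e ^ d := by rw [← pow_add]; congr 1; omega
    rw [h, Module.End.mul_apply, h0, map_zero]
  rw [Fintype.linearIndependent_iff]
  intro g hg
  suffices H : ∀ i : ℕ, ∀ hi : i < d, g ⟨i, hi⟩ = 0 by
    intro i; have := H i i.2; simpa using this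
  intro i
  induction i using Nat.strong_induction_on with
  | _ i ih =>
    intro hi
    have h2 := congrArg (e ^ (d - 1 - i)) hg
    rw [map_zero, map_sum] at h2
    have h3 : ∀ j : Fin d, (e ^ (d - 1 - i)) (g j • (e ^ (j : ℕ)) x)
        = g j • (e ^ (d - 1 - i + (j : ℕ))) x := by
      intro j; rw [map_smul, ← Module.End.mul_apply, ← pow_add]
    simp only [h3] at h2
    have h4 : ∑ j : Fin d, g j • (e ^ (d - 1 - i + (j : ℕ))) x
        = g ⟨i, hi⟩ • (e ^ (d - 1)) x := by
      rw [Finset.sum_eq_single (⟨i, hi⟩ : Fin d)]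
      · have h5 : d - 1 - i + i = d - 1 := by omega
        rw [h5]
      · intro j _ hj
        rcases lt_or_gt_of_ne (fun h : (j : ℕ) = i => hj (by ext; exact h)) with hlt | hgt
        · have := ih (j : ℕ) hlt j.2
          simp only [Fin.eta] at this
          rw [this, zero_smul]
        · rw [hz (d - 1 - i + (j : ℕ)) (by omega), smul_zero]
      · intro h; exact absurd (Finset.mem_univ _) h
    rw [h4] at h2
    rcases smul_eq_zero.1 h2 with h | h
    · exact h
    · exact absurd h h1

/-- If a nilpotent endomorphism `e` acts on `V = V₁ ⊕ V₂` as a single nilpotent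
Jordan block of size `d` on each of the invariant subspaces `V₁`, `V₂`, then
there is a nilpotent endomorphism `z` commuting with `e` acting as a single
nilpotent Jordan block of size `2d`. -/
theorem stmt5 (k : Type*) [Field k] [IsAlgClosed k]
    (V : Type*) [AddCommGroup V] [Module k V] [FiniteDimensional k V]
    (e : Module.End k V) (V₁ V₂ : Submodule k V) (d : ℕ) (hd : 0 < d)
    (hdisj : Disjoint V₁ V₂) (hsum : V₁ ⊔ V₂ = ⊤)
    (hinv1 : ∀ x ∈ V₁, e x ∈ V₁) (hinv2 : ∀ x ∈ V₂, e x ∈ V₂)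
    (hr1 : Module.finrank k V₁ = d) (hr2 : Module.finrank k V₂ = d)
    (hn1 : ∀ x ∈ V₁, (e ^ d) x = 0) (hn2 : ∀ x ∈ V₂, (e ^ d) x = 0)
    (hc1 : ∃ x ∈ V₁, (e ^ (d - 1)) x ≠ 0) (hc2 : ∃ x ∈ V₂, (e ^ (d - 1)) x ≠ 0) :
    ∃ z : Module.End k V, Commute z e ∧ z ^ (2 * d) = 0 ∧ z ^ (2 * d - 1) ≠ 0 := by
  classical
  obtain ⟨x₁, hx₁V, hx₁⟩ := hc1
  obtain ⟨x₂, hx₂V, hx₂⟩ := hc2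
  -- powers of e preserve invariant submodules
  have hmem : ∀ (W : Submodule k V), (∀ x ∈ W, e x ∈ W) →
      ∀ (n : ℕ) (x : V), x ∈ W → (e ^ n) x ∈ W := by
    intro W hW n
    induction n with
    | zero => intro x hx; simpa using hx
    | succ n ih =>
      intro x hx
      rw [pow_succ', Module.End.mul_apply]
      exact hW _ (ih x hx)
  -- the two families of iterates
  set f₁ : Fin d → V := fun i => (e ^ (i : ℕ)) x₁ with hf₁
  set f₂ : Fin d → V := fun i => (e ^ (i : ℕ)) x₂ with hf₂
  have li₁ : LinearIndependent k f₁ := indep_iterates e d x₁ (hn1 x₁ hx₁V) hx₁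
  have li₂ : LinearIndependent k f₂ := indep_iterates e d x₂ (hn2 x₂ hx₂V) hx₂
  have hsp₁ : Submodule.span k (Set.range f₁) ≤ V₁ := by
    rw [Submodule.span_le]
    rintro _ ⟨i, rfl⟩
    exact hmem V₁ hinv1 _ _ hx₁V
  have hsp₂ : Submodule.span k (Set.range f₂) ≤ V₂ := by
    rw [Submodule.span_le]
    rintro _ ⟨i, rfl⟩
    exact hmem V₂ hinv2 _ _ hx₂V
  have lisum : LinearIndependent k (Sum.elim f₁ f₂) :=
    li₁.sum_type li₂ (hdisj.mono hsp₁ hsp₂)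
  -- the interleaved family
  set c : Fin (2 * d) → V :=
    fun j => (e ^ ((j : ℕ) / 2)) (if (j : ℕ) % 2 = 0 then x₁ else x₂) with hc
  -- the interleaving equivalence
  set σf : Fin d ⊕ Fin d → Fin (2 * d) :=
    Sum.elim (fun i => ⟨2 * (i : ℕ), by omega⟩) (fun i => ⟨2 * (i : ℕ) + 1, by omega⟩) with hσf
  have hinj : Function.Injective σf := by
    rintro (a | a) (b | b) h <;>
      simp only [hσf, Sum.elim_inl, Sum.elim_inr, Fin.mk.injEq] at h <;>
      first
        | (congr 1; ext; omega)
        | omega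
  have hcard : Fintype.card (Fin d ⊕ Fin d) = Fintype.card (Fin (2 * d)) := by
    simp; omega
  have hbij : Function.Bijective σf :=
    (Fintype.bijective_iff_injective_and_card σf).2 ⟨hinj, hcard⟩
  set σ : Fin d ⊕ Fin d ≃ Fin (2 * d) := Equiv.ofBijective σf hbij with hσ
  have hcomp : c ∘ σ = Sum.elim f₁ f₂ := by
    funext a
    rcases a with i | i
    · show c ⟨2 * (i : ℕ), by omega⟩ = (e ^ (i : ℕ)) x₁
      simp only [hc]
      have h1 : (2 * (i : ℕ)) % 2 = 0 := by omega
      have h2 : (2 * (i : ℕ)) / 2 = (i : ℕ) := by omega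
      rw [h1, h2]; simp
    · show c ⟨2 * (i : ℕ) + 1, by omega⟩ = (e ^ (i : ℕ)) x₂
      simp only [hc]
      have h1 : (2 * (i : ℕ) + 1) % 2 = 1 := by omega
      have h2 : (2 * (i : ℕ) + 1) / 2 = (i : ℕ) := by omega
      rw [h1, h2]; simp
  have lic : LinearIndependent k c := by
    rw [← linearIndependent_equiv σ, hcomp]
    exact lisum
  -- dimension count
  have hVd : Module.finrank k V = 2 * d := by
    have h := Submodule.finrank_sup_add_finrank_inf_eq V₁ V₂
    rw [hsum, disjoint_iff.1 hdisj, hr1, hr2] at h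
    simp only [finrank_top, finrank_bot, add_zero] at h
    omega
  haveI : Nonempty (Fin (2 * d)) := ⟨⟨0, by omega⟩⟩
  -- the basis
  have hcardc : Fintype.card (Fin (2 * d)) = Module.finrank k V := by
    simp [hVd]
  set b : Basis (Fin (2 * d)) k V := basisOfLinearIndependentOfCardEqFinrank lic hcardc
    with hb
  have hbc : ⇑b = c := coe_basisOfLinearIndependentOfCardEqFinrank lic hcardc
  -- define z as the shift on the interleaved basis
  set z : Module.End k V := b.constr k
    (fun j : Fin (2 * d) => if h : (j : ℕ) + 1 < 2 * d then c ⟨(j : ℕ) + 1, h⟩ else 0)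
    with hzdef
  have hz_apply : ∀ j : Fin (2 * d),
      z (c j) = if h : (j : ℕ) + 1 < 2 * d then c ⟨(j : ℕ) + 1, h⟩ else 0 := by
    intro j
    conv_lhs => rw [← hbc, hzdef]
    exact b.constr_basis k _ j
  -- powers of z shift along the basis
  have hpow : ∀ (m : ℕ) (j : Fin (2 * d)),
      (z ^ m) (c j) = if h : (j : ℕ) + m < 2 * d then c ⟨(j : ℕ) + m, h⟩ else 0 := by
    intro m
    induction m with
    | zero =>
      intro j
      rw [pow_zero, Module.End.one_apply, dif_pos (by omega : (j : ℕ) + 0 < 2 * d)]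
      congr 1
    | succ m ih =>
      intro j
      rw [pow_succ, Module.End.mul_apply, hz_apply j]
      by_cases h : (j : ℕ) + 1 < 2 * d
      · rw [dif_pos h, ih ⟨(j : ℕ) + 1, h⟩]
        by_cases h' : (j : ℕ) + 1 + m < 2 * d
        · rw [dif_pos h', dif_pos (by omega : (j : ℕ) + (m + 1) < 2 * d)]
          congr 1; ext; simp; omega
        · rw [dif_neg h', dif_neg (by omega : ¬ ((j : ℕ) + (m + 1) < 2 * d))]
      · rw [dif_neg h, map_zero, dif_neg (by omega : ¬ ((j : ℕ) + (m + 1) < 2 * d))]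
  -- action of e on the basis
  have he_apply : ∀ j : Fin (2 * d),
      e (c j) = if h : (j : ℕ) + 2 < 2 * d then c ⟨(j : ℕ) + 2, h⟩ else 0 := by
    intro j
    have hec : e (c j) = (e ^ ((j : ℕ) / 2 + 1)) (if (j : ℕ) % 2 = 0 then x₁ else x₂) := by
      simp only [hc]
      rw [pow_succ', Module.End.mul_apply]
    by_cases h : (j : ℕ) + 2 < 2 * d
    · rw [dif_pos h, hec]
      simp only [hc]
      have h1 : ((j : ℕ) + 2) % 2 = (j : ℕ) % 2 := by omega
      have h2 : ((j : ℕ) + 2) / 2 = (j : ℕ) / 2 + 1 := by omega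
      rw [h1, h2]
    · rw [dif_neg h, hec]
      have hj2 : (j : ℕ) / 2 + 1 = d := by have := j.2; omega
      rw [hj2]
      by_cases hp : (j : ℕ) % 2 = 0
      · rw [if_pos hp]; exact hn1 x₁ hx₁V
      · rw [if_neg hp]; exact hn2 x₂ hx₂V
  -- e = z ^ 2
  have hsq : e = z ^ 2 := by
    apply b.ext
    intro j
    rw [hbc]  -- hope this rewrites ⇑b to c... we use show instead
    rw [he_apply j, hpow 2 j]
  have hcomm : Commute z e := by
    rw [hsq]
    exact (Commute.refl z).pow_right 2
  refine ⟨z, hcomm, ?_, ?_⟩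
  · apply b.ext
    intro j
    rw [hbc, hpow (2 * d) j, dif_neg (by omega : ¬ ((j : ℕ) + 2 * d < 2 * d))]
    simp
  · intro hzero
    have h0 : (0 : ℕ) < 2 * d := by omega
    have := hpow (2 * d - 1) ⟨0, h0⟩
    rw [hzero] at this
    simp only [LinearMap.zero_apply] at this
    rw [dif_pos (by simp; omega : (((⟨0, h0⟩ : Fin (2 * d)) : ℕ)) + (2 * d - 1) < 2 * d)] at this
    have hne : c ⟨0 + (2 * d - 1), by omega⟩ ≠ 0 := by
      rw [← hbc]; exact b.ne_zero _
    exact hne this.symm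
end

section
/- Let A = k[X]/(X^d) where k is a field of characteristic ≠ 2, let x be the image of X in A, and let z ∈ Mat₂(A) be the matrix with rows (x, 1) and (x², x). Then z^r = (2x)^{r-1} z for all r ≥ 1; consequently z^d ≠ 0 and z^{d+1} = 0 (when d ≥ 1). -/
set_option synthInstance.maxHeartbeats 1000000
set_option maxHeartbeats 1000000

/-- The truncated polynomial ring `A = k[X]/(X^d)`. -/
abbrev TruncPoly (k : Type*) [Field k] (d : ℕ) : Type _ :=
  Polynomial k ⧸ Ideal.span {(Polynomial.X : Polynomial k) ^ d}

lemma aux_pow {R : Type*} [CommRing R] (z : Matrix (Fin 2) (Fin 2) R) (a : R)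
    (hzz : z * z = a • z) : ∀ r : ℕ, 1 ≤ r → z ^ r = (a ^ (r - 1)) • z := by
  intro r hr
  induction r with
  | zero => omega
  | succ n ih =>
    rcases Nat.lt_or_ge 1 (n + 1) with h | h
    · have hn : 1 ≤ n := by omega
      rw [pow_succ, ih hn, Matrix.smul_mul, hzz, smul_smul, ← pow_succ,
        Nat.sub_add_cancel hn, Nat.add_sub_cancel]
    · have : n = 0 := by omega
      subst this
      simp

/-- In `A = k[X]/(X^d)` (char k ≠ 2), the matrix `z = (x 1; x² x)` satisfies
`z^r = (2x)^{r-1} • z` for all `r ≥ 1`; consequently `z^d ≠ 0` and `z^{d+1} = 0`. -/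
theorem stmt7 (k : Type*) [Field k] (h2 : (2 : k) ≠ 0) (d : ℕ) (hd : 1 ≤ d)
    (x : TruncPoly k d) (hx : x = Ideal.Quotient.mk _ Polynomial.X)
    (z : Matrix (Fin 2) (Fin 2) (TruncPoly k d)) (hz : z = !![x, 1; x ^ 2, x]) :
    (∀ r : ℕ, 1 ≤ r → z ^ r = ((2 * x) ^ (r - 1)) • z) ∧ z ^ d ≠ 0 ∧ z ^ (d + 1) = 0 := by
  have hzz : z * z = (2 * x) • z := by
    subst hz
    ext i j
    fin_cases i <;> fin_cases j <;>
      simp [Matrix.mul_apply, Fin.sum_univ_two] <;> ring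
  have hmain := aux_pow z (2 * x) hzz
  have hxd : x ^ d = 0 := by
    rw [hx, ← map_pow, Ideal.Quotient.eq_zero_iff_mem]
    exact Ideal.subset_span rfl
  have hxd1 : (2 * x) ^ (d - 1) ≠ 0 := by
    rw [hx, show (2 : TruncPoly k d) = Ideal.Quotient.mk _ (2 : Polynomial k) from rfl,
      ← map_mul, ← map_pow, Ne, Ideal.Quotient.eq_zero_iff_mem,
      Ideal.mem_span_singleton]
    intro hdvd
    have h2p : (2 : Polynomial k) ≠ 0 := by
      intro h
      exact h2 (by simpa using congrArg (Polynomial.eval 0) h)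
    have hne : (2 * Polynomial.X : Polynomial k) ^ (d - 1) ≠ 0 :=
      pow_ne_zero _ (mul_ne_zero h2p Polynomial.X_ne_zero)
    have hle := Polynomial.natDegree_le_of_dvd hdvd hne
    have hdeg : ((2 * Polynomial.X : Polynomial k) ^ (d - 1)).natDegree = d - 1 := by
      rw [Polynomial.natDegree_pow, Polynomial.natDegree_mul h2p Polynomial.X_ne_zero,
        Polynomial.natDegree_X, Polynomial.natDegree_ofNat]
      ring
    rw [hdeg, Polynomial.natDegree_pow, Polynomial.natDegree_X, mul_one] at hle
    omega
  refine ⟨hmain, ?_, ?_⟩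
  · intro h0
    rw [hmain d hd] at h0
    have := congrArg (fun m => m 0 1) h0
    simp [hz] at this
    exact hxd1 this
  · rw [hmain (d + 1) (by omega)]
    rw [Nat.add_sub_cancel, mul_pow, hxd, mul_zero]
    exact zero_smul (TruncPoly k d) z
end

section
/- Let k have characteristic ≠ 2, let V = V₁ ⊕ V₂ with dim V₁ = dim V₂ = d, and let Ψ be a nondegenerate bilinear form on V with Ψ(u,v) = (-1)^κ Ψ(v,u) where d + κ is even, such that V₁, V₂ are totally isotropic and are dually paired by bases v₁,…,v_d of V₁ and v'₁,…,v'_d of V₂ with Ψ(v_i, v'_j) = (-1)^{i-1} δ_{i,d+1-j}. Let e be the nilpotent endomorphism sending v_i ↦ v_{i+1}, v'_i ↦ v'_{i+1} (indices > d map to 0). Then the endomorphism z defined by z(v_i) = v_{i+1} + v'_{i+2}, z(v'_i) = v'_{i+1} + v_i is skew-adjoint with respect to Ψ, commutes with e, and satisfies z^d ≠ 0, z^{d+1} = 0. -/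
/-!
Put `u i = v i + v' (i + 1)`. Then `z (v' i) = u i`, `z (v i) = u (i + 1)` and
`z (u i) = 2 • u (i + 1)`, so on the `u`'s `z` is twice the shift: `z ^ (d + 1)` kills every
basis vector, while `z ^ d (v' 0) = 2 ^ (d - 1) • v (d - 1) ≠ 0` because `2 ≠ 0`.
Skew-adjointness is checked on pairs of basis vectors; at most two pairings survive in each
case, and they cancel, using `Ψ v' v = (-1) ^ κ Ψ v v'` and the parity condition on `d + κ`.
-/

lemma neg_one_pow_add_neg_one_pow_of_odd {R : Type*} [Ring R] {m n : ℕ} (h : Odd (m + n)) :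
    (-1 : R) ^ m + (-1 : R) ^ n = 0 := by
  rcases Nat.even_or_odd n with hn | hn
  · rw [(Nat.odd_add.1 h).2 hn |>.neg_one_pow, hn.neg_one_pow, neg_add_cancel]
  · rw [(Nat.odd_add'.1 h).1 hn |>.neg_one_pow, hn.neg_one_pow, add_neg_cancel]

section PairedBases

variable {k V W : Type*} [CommRing k] [AddCommGroup V] [Module k V] [AddCommGroup W] [Module k W]
  {d : ℕ} {v v' : ℕ → V}

lemma LinearMap.ext_of_paired_basis (b : Module.Basis (Fin d ⊕ Fin d) k V)
    (hb : ∀ i : Fin d, b (Sum.inl i) = v i ∧ b (Sum.inr i) = v' i) {f g : V →ₗ[k] W}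
    (hv : ∀ i, f (v i) = g (v i)) (hv' : ∀ i, f (v' i) = g (v' i)) : f = g :=
  b.ext fun
    | .inl i => by rw [(hb i).1]; exact hv i
    | .inr i => by rw [(hb i).2]; exact hv' i

lemma LinearMap.apply_eq_of_lt_of_eq_zero (Ψ : V →ₗ[k] W →ₗ[k] k) {w : ℕ → W}
    (hv : ∀ i, d ≤ i → v i = 0) (hw : ∀ j, d ≤ j → w j = 0) {c : ℕ → ℕ → k}
    (hc : ∀ i j, d ≤ i ∨ d ≤ j → c i j = 0) (h : ∀ i j, i < d → j < d → Ψ (v i) (w j) = c i j)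
    (i j : ℕ) : Ψ (v i) (w j) = c i j := by
  by_cases hi : i < d
  · by_cases hj : j < d
    · exact h i j hi hj
    · rw [hw j (not_lt.1 hj), map_zero, hc i j (Or.inr (not_lt.1 hj))]
  · rw [hv i (not_lt.1 hi), map_zero, LinearMap.zero_apply, hc i j (Or.inl (not_lt.1 hi))]

end PairedBases

section ShiftPair

variable {k V : Type*} [CommRing k] [AddCommGroup V] [Module k V] {v v' : ℕ → V}
  {z : Module.End k V}

lemma pow_apply_add_shift (hzv : ∀ i, z (v i) = v (i + 1) + v' (i + 2))
    (hzv' : ∀ i, z (v' i) = v' (i + 1) + v i) (n i : ℕ) :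
    (z ^ n) (v i + v' (i + 1)) = (2 : k) ^ n • (v (i + n) + v' (i + n + 1)) := by
  induction n generalizing i with
  | zero => simp
  | succ n ih =>
    have hzu : z (v i + v' (i + 1)) = (2 : k) • (v (i + 1) + v' (i + 1 + 1)) := by
      rw [map_add, hzv, hzv', two_smul]
      abel
    rw [pow_succ, Module.End.mul_apply, hzu, map_smul, ih, smul_smul, ← pow_succ']
    simp only [Nat.add_right_comm i 1 n, add_assoc]

lemma pow_succ_eq_zero_of_paired_basis {d : ℕ} (b : Module.Basis (Fin d ⊕ Fin d) k V)
    (hb : ∀ i : Fin d, b (Sum.inl i) = v i ∧ b (Sum.inr i) = v' i)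
    (hv0 : ∀ i, d ≤ i → v i = 0) (hv'0 : ∀ i, d ≤ i → v' i = 0)
    (hzv : ∀ i, z (v i) = v (i + 1) + v' (i + 2)) (hzv' : ∀ i, z (v' i) = v' (i + 1) + v i) :
    z ^ (d + 1) = 0 := by
  have hu : ∀ i, (z ^ d) (v i + v' (i + 1)) = 0 := fun i => by
    rw [pow_apply_add_shift hzv hzv', hv0 _ (by omega), hv'0 _ (by omega), add_zero, smul_zero]
  refine LinearMap.ext_of_paired_basis b hb (fun i => ?_) (fun i => ?_) <;>
    rw [pow_succ, Module.End.mul_apply, LinearMap.zero_apply]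
  · rw [hzv]
    exact hu (i + 1)
  · rw [hzv', add_comm]
    exact hu i

lemma pow_ne_zero_of_paired_basis [IsDomain k] (h2 : (2 : k) ≠ 0) {d : ℕ} (hd : 0 < d)
    (b : Module.Basis (Fin d ⊕ Fin d) k V)
    (hb : ∀ i : Fin d, b (Sum.inl i) = v i ∧ b (Sum.inr i) = v' i)
    (hv'0 : ∀ i, d ≤ i → v' i = 0)
    (hzv : ∀ i, z (v i) = v (i + 1) + v' (i + 2)) (hzv' : ∀ i, z (v' i) = v' (i + 1) + v i) :
    z ^ d ≠ 0 := by
  obtain ⟨n, rfl⟩ : ∃ n, d = n + 1 := ⟨d - 1, by omega⟩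
  intro hz
  have h : (2 : k) ^ n • v n = 0 :=
    calc (2 : k) ^ n • v n = (z ^ n) (v 0 + v' (0 + 1)) := by
          rw [pow_apply_add_shift hzv hzv', hv'0 (0 + n + 1) (by omega), add_zero, zero_add]
      _ = (z ^ (n + 1)) (v' 0) := by rw [pow_succ, Module.End.mul_apply, hzv', add_comm]
      _ = 0 := by rw [hz, LinearMap.zero_apply]
  rw [← (hb ⟨n, n.lt_succ_self⟩).1, b.smul_eq_zero] at h
  exact h.elim (pow_ne_zero n h2) (b.ne_zero _)

end ShiftPair

section SkewAdjoint

variable {k V : Type*} [CommRing k] [AddCommGroup V] [Module k V] (Ψ : V →ₗ[k] V →ₗ[k] k)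
  {d κ : ℕ} {v v' : ℕ → V}

lemma apply_v'_v_eq (hsymm : ∀ u w : V, Ψ u w = (-1 : k) ^ κ * Ψ w u)
    (hpair : ∀ i j, Ψ (v i) (v' j) = if i + j + 1 = d then (-1 : k) ^ i else 0) (i j : ℕ) :
    Ψ (v' i) (v j) = if i + j + 1 = d then (-1 : k) ^ (κ + j) else 0 := by
  rw [hsymm, hpair, Nat.add_comm j i]
  split_ifs <;> simp [pow_add]

variable {z : Module.End k V}

lemma skew_v_v (hκ : Even (d + κ)) (hsymm : ∀ u w : V, Ψ u w = (-1 : k) ^ κ * Ψ w u)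
    (hiso1 : ∀ i j, Ψ (v i) (v j) = 0)
    (hpair : ∀ i j, Ψ (v i) (v' j) = if i + j + 1 = d then (-1 : k) ^ i else 0)
    (hzv : ∀ i, z (v i) = v (i + 1) + v' (i + 2)) (i j : ℕ) :
    Ψ (z (v i)) (v j) + Ψ (v i) (z (v j)) = 0 := by
  simp only [hzv, map_add, LinearMap.add_apply, hiso1, apply_v'_v_eq Ψ hsymm hpair, hpair]
  rw [Nat.even_iff] at hκ
  split_ifs <;> (try simp only [zero_add, add_zero]) <;>
    first | omega | exact neg_one_pow_add_neg_one_pow_of_odd (Nat.odd_iff.2 (by omega))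

lemma skew_v_v' (hiso1 : ∀ i j, Ψ (v i) (v j) = 0) (hiso2 : ∀ i j, Ψ (v' i) (v' j) = 0)
    (hpair : ∀ i j, Ψ (v i) (v' j) = if i + j + 1 = d then (-1 : k) ^ i else 0)
    (hzv : ∀ i, z (v i) = v (i + 1) + v' (i + 2)) (hzv' : ∀ i, z (v' i) = v' (i + 1) + v i)
    (i j : ℕ) : Ψ (z (v i)) (v' j) + Ψ (v i) (z (v' j)) = 0 := by
  simp only [hzv, hzv', map_add, LinearMap.add_apply, hiso1, hiso2, hpair]
  split_ifs <;> (try simp only [zero_add, add_zero]) <;>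
    first | omega | exact neg_one_pow_add_neg_one_pow_of_odd (Nat.odd_iff.2 (by omega))

lemma skew_v'_v (hsymm : ∀ u w : V, Ψ u w = (-1 : k) ^ κ * Ψ w u)
    (hiso1 : ∀ i j, Ψ (v i) (v j) = 0) (hiso2 : ∀ i j, Ψ (v' i) (v' j) = 0)
    (hpair : ∀ i j, Ψ (v i) (v' j) = if i + j + 1 = d then (-1 : k) ^ i else 0)
    (hzv : ∀ i, z (v i) = v (i + 1) + v' (i + 2)) (hzv' : ∀ i, z (v' i) = v' (i + 1) + v i)
    (i j : ℕ) : Ψ (z (v' i)) (v j) + Ψ (v' i) (z (v j)) = 0 := by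
  simp only [hzv, hzv', map_add, LinearMap.add_apply, hiso1, hiso2, apply_v'_v_eq Ψ hsymm hpair]
  split_ifs <;> (try simp only [zero_add, add_zero]) <;>
    first | omega | exact neg_one_pow_add_neg_one_pow_of_odd (Nat.odd_iff.2 (by omega))

lemma skew_v'_v' (hκ : Even (d + κ)) (hsymm : ∀ u w : V, Ψ u w = (-1 : k) ^ κ * Ψ w u)
    (hiso2 : ∀ i j, Ψ (v' i) (v' j) = 0)
    (hpair : ∀ i j, Ψ (v i) (v' j) = if i + j + 1 = d then (-1 : k) ^ i else 0)
    (hzv' : ∀ i, z (v' i) = v' (i + 1) + v i) (i j : ℕ) :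
    Ψ (z (v' i)) (v' j) + Ψ (v' i) (z (v' j)) = 0 := by
  simp only [hzv', map_add, LinearMap.add_apply, hiso2, apply_v'_v_eq Ψ hsymm hpair, hpair]
  rw [Nat.even_iff] at hκ
  split_ifs
  · rw [zero_add, zero_add]
    exact neg_one_pow_add_neg_one_pow_of_odd (Nat.odd_iff.2 (by omega))
  · simp only [add_zero]

lemma skew_of_paired_basis (b : Module.Basis (Fin d ⊕ Fin d) k V)
    (hb : ∀ i : Fin d, b (Sum.inl i) = v i ∧ b (Sum.inr i) = v' i)
    (hκ : Even (d + κ)) (hsymm : ∀ u w : V, Ψ u w = (-1 : k) ^ κ * Ψ w u)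
    (hiso1 : ∀ i j, Ψ (v i) (v j) = 0) (hiso2 : ∀ i j, Ψ (v' i) (v' j) = 0)
    (hpair : ∀ i j, Ψ (v i) (v' j) = if i + j + 1 = d then (-1 : k) ^ i else 0)
    (hzv : ∀ i, z (v i) = v (i + 1) + v' (i + 2)) (hzv' : ∀ i, z (v' i) = v' (i + 1) + v i)
    (u w : V) : Ψ (z u) w + Ψ u (z w) = 0 := by
  suffices h : Ψ.comp z + Ψ.compl₂ z = 0 from by
    simpa using LinearMap.congr_fun₂ h u w
  refine LinearMap.ext_of_paired_basis b hb (fun i => ?_) (fun i => ?_) <;>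
    refine LinearMap.ext_of_paired_basis b hb (fun j => ?_) (fun j => ?_) <;>
    simp only [LinearMap.add_apply, LinearMap.comp_apply, LinearMap.compl₂_apply,
      LinearMap.zero_apply]
  exacts [skew_v_v Ψ hκ hsymm hiso1 hpair hzv i j,
    skew_v_v' Ψ hiso1 hiso2 hpair hzv hzv' i j,
    skew_v'_v Ψ hsymm hiso1 hiso2 hpair hzv hzv' i j,
    skew_v'_v' Ψ hκ hsymm hiso2 hpair hzv' i j]

end SkewAdjoint

theorem stmt8_general (k : Type*) [Field k] (h2 : (2 : k) ≠ 0)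
    (V : Type*) [AddCommGroup V] [Module k V]
    (d : ℕ) (hd : 0 < d) (κ : ℕ) (hκ : Even (d + κ))
    (Ψ : V →ₗ[k] V →ₗ[k] k)
    (hsymm : ∀ u w : V, Ψ u w = (-1 : k) ^ κ * Ψ w u)
    (v v' : ℕ → V)
    (hv0 : ∀ i, d ≤ i → v i = 0) (hv'0 : ∀ i, d ≤ i → v' i = 0)
    (b : Module.Basis (Fin d ⊕ Fin d) k V)
    (hb : ∀ i : Fin d, b (Sum.inl i) = v i ∧ b (Sum.inr i) = v' i)
    (hiso1 : ∀ i j, i < d → j < d → Ψ (v i) (v j) = 0)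
    (hiso2 : ∀ i j, i < d → j < d → Ψ (v' i) (v' j) = 0)
    (hpair : ∀ i j, i < d → j < d →
      Ψ (v i) (v' j) = if i + j + 1 = d then (-1 : k) ^ i else 0)
    (e : Module.End k V)
    (hev : ∀ i, e (v i) = v (i + 1)) (hev' : ∀ i, e (v' i) = v' (i + 1))
    (z : Module.End k V)
    (hzv : ∀ i, z (v i) = v (i + 1) + v' (i + 2))
    (hzv' : ∀ i, z (v' i) = v' (i + 1) + v i) :
    (∀ u w : V, Ψ (z u) w + Ψ u (z w) = 0) ∧
    z * e = e * z ∧ z ^ d ≠ 0 ∧ z ^ (d + 1) = 0 := by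
  have hvv := Ψ.apply_eq_of_lt_of_eq_zero hv0 hv0 (c := fun _ _ => 0) (fun _ _ _ => rfl) hiso1
  have hv'v' := Ψ.apply_eq_of_lt_of_eq_zero hv'0 hv'0 (c := fun _ _ => 0) (fun _ _ _ => rfl) hiso2
  have hvv' := Ψ.apply_eq_of_lt_of_eq_zero hv0 hv'0
    (fun i j h => if_neg (by omega)) hpair
  refine ⟨skew_of_paired_basis Ψ b hb hκ hsymm hvv hv'v' hvv' hzv hzv', ?_,
    pow_ne_zero_of_paired_basis h2 hd b hb hv'0 hzv hzv',
    pow_succ_eq_zero_of_paired_basis b hb hv0 hv'0 hzv hzv'⟩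
  refine LinearMap.ext_of_paired_basis b hb (fun i => ?_) (fun i => ?_) <;>
    simp only [Module.End.mul_apply, hev, hev', hzv, hzv', map_add]

/-- The skew-adjoint nilpotent endomorphism `z` commuting with a pair of
dually-paired Jordan blocks of even "type" `d + κ`, with `z(v_i)=v_{i+1}+v'_{i+2}`,
`z(v'_i)=v'_{i+1}+v_i`, satisfies `z^d ≠ 0` and `z^{d+1} = 0`.
Indexing is zero-based: `v 0, …, v (d-1)` is the basis, `v i = 0` for `i ≥ d`. -/
theorem stmt8 (k : Type*) [Field k] (h2 : (2 : k) ≠ 0)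
    (V : Type*) [AddCommGroup V] [Module k V]
    (d : ℕ) (hd : 0 < d) (κ : ℕ) (hκ : Even (d + κ))
    (Ψ : V →ₗ[k] V →ₗ[k] k)
    (hnd : ∀ u : V, (∀ w : V, Ψ u w = 0) → u = 0)
    (hsymm : ∀ u w : V, Ψ u w = (-1 : k) ^ κ * Ψ w u)
    (v v' : ℕ → V)
    (hv0 : ∀ i, d ≤ i → v i = 0) (hv'0 : ∀ i, d ≤ i → v' i = 0)
    (b : Module.Basis (Fin d ⊕ Fin d) k V)
    (hb : ∀ i : Fin d, b (Sum.inl i) = v i ∧ b (Sum.inr i) = v' i)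
    (hiso1 : ∀ i j, i < d → j < d → Ψ (v i) (v j) = 0)
    (hiso2 : ∀ i j, i < d → j < d → Ψ (v' i) (v' j) = 0)
    (hpair : ∀ i j, i < d → j < d →
      Ψ (v i) (v' j) = if i + j + 1 = d then (-1 : k) ^ i else 0)
    (e : Module.End k V)
    (hev : ∀ i, e (v i) = v (i + 1)) (hev' : ∀ i, e (v' i) = v' (i + 1))
    (z : Module.End k V)
    (hzv : ∀ i, z (v i) = v (i + 1) + v' (i + 2))
    (hzv' : ∀ i, z (v' i) = v' (i + 1) + v i) :
    (∀ u w : V, Ψ (z u) w + Ψ u (z w) = 0) ∧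
    z * e = e * z ∧ z ^ d ≠ 0 ∧ z ^ (d + 1) = 0 :=
  stmt8_general k h2 V d hd κ hκ Ψ hsymm v v' hv0 hv'0 b hb hiso1 hiso2 hpair e hev hev' z hzv hzv'
end
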